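/- Let N ≥ 1, M > 0, and let x, y ∈ ℝ^N with all components in [0, M] and x ≠ y. Then there is no pair (δ, F) with 0 < δ < d^N(x, y) and F : K_x → K_y a map satisfying both |d²(p,q) − d²(F(p), F(q))| ≤ 2δ for all p, q ∈ K_x and: for every q ∈ K_y there exists p ∈ K_x with d²(F(p), q) ≤ 2δ. (That is, no 2δ-isometry K_x → K_y exists for δ < d^N(x,y).) -/
import Mathlib


noncomputable def box (M : ℝ) (n : ℕ) : Set (ℝ × ℝ) :=
  Set.Icc (4 * M + 10 * M * (n : ℝ)) (4 * M + 10 * M * (n : ℝ) + 2 * M) ×ˢ Set.Icc (-M) M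

noncomputable def pp {N : ℕ} (M : ℝ) (z : Fin N → ℝ) (n : Fin N) : ℝ × ℝ :=
  (10 * M * ((n : ℕ) : ℝ), z n)

noncomputable def pm {N : ℕ} (M : ℝ) (z : Fin N → ℝ) (n : Fin N) : ℝ × ℝ :=
  (10 * M * ((n : ℕ) : ℝ), -(z n))

noncomputable def Kset {N : ℕ} (M : ℝ) (z : Fin N → ℝ) : Set (ℝ × ℝ) :=
  ⋃ n : Fin N, ({pp M z n, pm M z n} ∪ box M n)

theorem pp_mem {N : ℕ} (M : ℝ) (z : Fin N → ℝ) (n : Fin N) : pp M z n ∈ Kset M z :=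
  Set.mem_iUnion.mpr ⟨n, Or.inl (Set.mem_insert _ _)⟩

theorem pm_mem {N : ℕ} (M : ℝ) (z : Fin N → ℝ) (n : Fin N) : pm M z n ∈ Kset M z :=
  Set.mem_iUnion.mpr ⟨n, Or.inl (Set.mem_insert_of_mem _ rfl)⟩

theorem Kset_compact {N : ℕ} (M : ℝ) (z : Fin N → ℝ) : IsCompact (Kset M z) := by
  apply isCompact_iUnion
  intro n
  exact ((Set.toFinite _).isCompact).union (isCompact_Icc.prod isCompact_Icc)

instance {N : ℕ} (M : ℝ) (z : Fin N → ℝ) : CompactSpace ↥(Kset M z) :=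
  isCompact_iff_compactSpace.mp (Kset_compact M z)

theorem Kset_nonempty {N : ℕ} (hN : 0 < N) (M : ℝ) (z : Fin N → ℝ) : (Kset M z).Nonempty :=
  ⟨pp M z ⟨0, hN⟩, pp_mem M z ⟨0, hN⟩⟩

namespace NoIso2D

variable {N : ℕ} {M : ℝ}

theorem dist2 (p q : ℝ × ℝ) : dist p q = max |p.1 - q.1| |p.2 - q.2| := by
  rw [Prod.dist_eq, Real.dist_eq, Real.dist_eq]

theorem abs_fst_le (p q : ℝ × ℝ) : |p.1 - q.1| ≤ dist p q := by
  rw [dist2]; exact le_max_left _ _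

theorem abs_snd_le (p q : ℝ × ℝ) : |p.2 - q.2| ≤ dist p q := by
  rw [dist2]; exact le_max_right _ _

theorem mem_box {n : ℕ} {p : ℝ × ℝ} :
    p ∈ box M n ↔ (4*M + 10*M*(n:ℝ) ≤ p.1 ∧ p.1 ≤ 4*M + 10*M*(n:ℝ) + 2*M)
      ∧ (-M ≤ p.2 ∧ p.2 ≤ M) := by
  rw [box, Set.mem_prod, Set.mem_Icc, Set.mem_Icc]

theorem mem_kset {z : Fin N → ℝ} {p : ℝ × ℝ} (hp : p ∈ Kset M z) :
    ∃ n : Fin N, p = pp M z n ∨ p = pm M z n ∨ p ∈ box M (n : ℕ) := by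
  simp only [Kset, Set.mem_iUnion, Set.mem_union, Set.mem_insert_iff,
    Set.mem_singleton_iff] at hp
  obtain ⟨n, hn⟩ := hp
  rcases hn with (h | h) | h
  exacts [⟨n, Or.inl h⟩, ⟨n, Or.inr (Or.inl h)⟩, ⟨n, Or.inr (Or.inr h)⟩]

theorem ten_rigid (hM : 0 < M) {a b : ℕ} (h1 : 10*M*(a:ℝ) - 10*M*(b:ℝ) < 10*M)
    (h2 : 10*M*(b:ℝ) - 10*M*(a:ℝ) < 10*M) : a = b := by
  by_contra hne
  rcases Nat.lt_or_ge a b with hlt | hge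
  · have hc : ((a:ℕ):ℝ) + 1 ≤ (b:ℝ) := by exact_mod_cast hlt
    nlinarith
  · have hlt : b < a := lt_of_le_of_ne hge (fun e => hne e.symm)
    have hc : ((b:ℕ):ℝ) + 1 ≤ (a:ℝ) := by exact_mod_cast hlt
    nlinarith

theorem tip_id (hM : 0 < M) {z : Fin N → ℝ} {p : ℝ × ℝ} (hp : p ∈ Kset M z)
    (k : Fin N) (h : |p.1 - 10*M*((k:ℕ):ℝ)| < 4*M) :
    p = pp M z k ∨ p = pm M z k := by
  obtain ⟨n, hn⟩ := mem_kset hp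
  have habs := abs_lt.mp h
  rcases hn with h1 | h1 | h1
  · have hf : p.1 = 10*M*((n:ℕ):ℝ) := by rw [h1]; rfl
    have hnk : (n:ℕ) = (k:ℕ) := by
      refine ten_rigid hM ?_ ?_ <;> rw [hf] at habs <;> linarith [habs.1, habs.2]
    left; rw [h1]; congr 1; exact Fin.ext hnk
  · have hf : p.1 = 10*M*((n:ℕ):ℝ) := by rw [h1]; rfl
    have hnk : (n:ℕ) = (k:ℕ) := by
      refine ten_rigid hM ?_ ?_ <;> rw [hf] at habs <;> linarith [habs.1, habs.2]
    right; rw [h1]; congr 1; exact Fin.ext hnk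
  · exfalso
    obtain ⟨⟨hb1, hb2⟩, _, _⟩ := mem_box.mp h1
    have hnk : (n:ℕ) = (k:ℕ) := by
      refine ten_rigid hM ?_ ?_ <;> linarith [habs.1, habs.2]
    rw [hnk] at hb1
    linarith [habs.2]

theorem fst_nonneg (hM : 0 < M) {z : Fin N → ℝ} {p : ℝ × ℝ} (hp : p ∈ Kset M z) : 0 ≤ p.1 := by
  obtain ⟨n, hn⟩ := mem_kset hp
  have h0 : (0:ℝ) ≤ ((n:ℕ):ℝ) := Nat.cast_nonneg _
  rcases hn with h1 | h1 | h1
  · rw [h1]; show (0:ℝ) ≤ 10*M*((n:ℕ):ℝ); positivity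
  · rw [h1]; show (0:ℝ) ≤ 10*M*((n:ℕ):ℝ); positivity
  · obtain ⟨⟨hb1, _⟩, _⟩ := mem_box.mp h1
    nlinarith

theorem snd_abs (hM : 0 < M) {z : Fin N → ℝ} (hz : ∀ n, z n ∈ Set.Icc (0:ℝ) M)
    {p : ℝ × ℝ} (hp : p ∈ Kset M z) : |p.2| ≤ M := by
  obtain ⟨n, hn⟩ := mem_kset hp
  rcases hn with h1 | h1 | h1
  · rw [h1]; show |z n| ≤ M
    exact abs_le.mpr ⟨by linarith [(hz n).1], (hz n).2⟩
  · rw [h1]; show |-(z n)| ≤ M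
    rw [abs_neg]; exact abs_le.mpr ⟨by linarith [(hz n).1], (hz n).2⟩
  · obtain ⟨_, hb3, hb4⟩ := mem_box.mp h1
    exact abs_le.mpr ⟨hb3, hb4⟩

theorem dist_le_K (hM : 0 < M) {z : Fin N → ℝ} (hz : ∀ n, z n ∈ Set.Icc (0:ℝ) M)
    {p q : ℝ × ℝ} (hp : p ∈ Kset M z) (hq : q ∈ Kset M z) :
    dist p q ≤ max |p.1 - q.1| (2*M) := by
  rw [dist2]
  refine max_le (le_max_left _ _) (le_trans ?_ (le_max_right _ _))
  have h1 := snd_abs hM hz hp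
  have h2 := snd_abs hM hz hq
  calc |p.2 - q.2| ≤ |p.2| + |q.2| := abs_sub _ _
    _ ≤ 2*M := by linarith

theorem dist_pp_pm {z : Fin N → ℝ} {M : ℝ} (n : Fin N) (h : 0 ≤ z n) :
    dist (pp M z n) (pm M z n) = 2 * z n := by
  rw [dist2]
  show max |10*M*((n:ℕ):ℝ) - 10*M*((n:ℕ):ℝ)| |z n - -z n| = 2 * z n
  rw [sub_self, abs_zero]
  rw [show z n - -z n = 2 * z n by ring, abs_of_nonneg (by linarith)]
  exact max_eq_right (by linarith)

theorem window {M δ c s d1 d2 : ℝ} (hM : 0 < M) (hδM : δ < M)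
    (hc : 0 ≤ c) (hs : 0 ≤ s) (h12 : |d1 - d2| ≤ 2*δ)
    (hd1low : c ≤ d1) (hd1high : d1 ≤ max c (2*M))
    (hd2low : s ≤ d2) (hd2high : d2 ≤ max s (2*M)) : |s - c| < 4*M := by
  obtain ⟨h12a, h12b⟩ := abs_le.mp h12
  rw [abs_lt]
  constructor
  · rcases le_or_gt s (2*M) with hcase | hcase
    · rw [max_eq_right hcase] at hd2high
      linarith
    · rw [max_eq_left hcase.le] at hd2high
      linarith
  · have hmx : max c (2*M) ≤ c + 2*M := max_le (by linarith) (by linarith)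
    linarith

end NoIso2D

open NoIso2D in
/-- For `x ≠ y` there is no 2δ-isometry `K_x → K_y` with `δ < d^N(x, y)`. -/
theorem no_two_delta_isometry {N : ℕ} (hN : 0 < N) {M : ℝ} (hM : 0 < M)
    (x y : Fin N → ℝ) (hx : ∀ n, x n ∈ Set.Icc (0 : ℝ) M) (hy : ∀ n, y n ∈ Set.Icc (0 : ℝ) M)
    (hxy : x ≠ y) :
    ¬ ∃ (δ : ℝ) (F : ↥(Kset M x) → ↥(Kset M y)),
        0 < δ ∧ δ < dist x y ∧
        (∀ p q : ↥(Kset M x), |dist p q - dist (F p) (F q)| ≤ 2 * δ) ∧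
        (∀ q : ↥(Kset M y), ∃ p : ↥(Kset M x), dist (F p) q ≤ 2 * δ) := by
  rintro ⟨δ, F, hδ0, hδd, hdist, hcov⟩
  -- basic bounds
  have hMle : dist x y ≤ M := by
    refine (dist_pi_le_iff hM.le).mpr fun n => ?_
    rw [Real.dist_eq, abs_le]
    exact ⟨by linarith [(hx n).1, (hy n).2], by linarith [(hx n).2, (hy n).1]⟩
  have hδM : δ < M := lt_of_lt_of_le hδd hMle
  obtain ⟨n1, hn1⟩ : ∃ n, δ < |x n - y n| := by
    by_contra hcon
    push_neg at hcon
    have hle : dist x y ≤ δ := (dist_pi_le_iff hδ0.le).mpr fun n => by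
      rw [Real.dist_eq]; exact hcon n
    linarith
  have hd' : ∀ p q : ↥(Kset M x),
      |dist (p : ℝ × ℝ) (q : ℝ × ℝ) - dist ((F p : ℝ × ℝ)) ((F q : ℝ × ℝ))| ≤ 2*δ := by
    intro p q
    have h := hdist p q
    rwa [Subtype.dist_eq, Subtype.dist_eq] at h
  have hcov' : ∀ q ∈ Kset M y, ∃ p : ↥(Kset M x), dist ((F p : ℝ × ℝ)) q ≤ 2*δ := by
    intro q hq
    obtain ⟨p, hp⟩ := hcov ⟨q, hq⟩
    exact ⟨p, by rwa [Subtype.dist_eq] at hp⟩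
  set z0 : Fin N := ⟨0, hN⟩ with hz0def
  have hz0n : ((z0 : ℕ) : ℝ) = 0 := by simp [hz0def]
  -- anchor pL : approximate preimage of the left tip of K_y
  obtain ⟨pL, hpL⟩ := hcov' (pp M y z0) (pp_mem M y z0)
  have hppy0 : (pp M y z0).1 = 0 := by show 10*M*((z0:ℕ):ℝ) = 0; rw [hz0n]; ring
  have hsFpL_nonneg : (0:ℝ) ≤ ((F pL : ℝ × ℝ)).1 := fst_nonneg hM (F pL).2
  have hsFpL_le : ((F pL : ℝ × ℝ)).1 ≤ 2*δ := by
    have h1 := abs_fst_le ((F pL : ℝ × ℝ)) (pp M y z0)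
    rw [hppy0, sub_zero] at h1
    have h2 := le_abs_self (((F pL : ℝ × ℝ)).1)
    linarith
  have hFpLtip : (F pL : ℝ × ℝ) = pp M y z0 ∨ (F pL : ℝ × ℝ) = pm M y z0 := by
    apply tip_id hM (F pL).2 z0
    rw [hz0n, mul_zero, sub_zero, abs_of_nonneg hsFpL_nonneg]
    linarith
  have hsFpL : ((F pL : ℝ × ℝ)).1 = 0 := by
    rcases hFpLtip with h | h <;> rw [h]
    · exact hppy0
    · show 10*M*((z0:ℕ):ℝ) = 0; rw [hz0n]; ring
  -- pL is itself a tip of K_x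
  have hpLtip : ∃ k : Fin N, (pL : ℝ × ℝ) = pp M x k ∨ (pL : ℝ × ℝ) = pm M x k := by
    obtain ⟨n, hn⟩ := mem_kset pL.2
    rcases hn with h1 | h1 | h1
    · exact ⟨n, Or.inl h1⟩
    · exact ⟨n, Or.inr h1⟩
    exfalso
    obtain ⟨⟨hb1, hb2⟩, hb3, hb4⟩ := mem_box.mp h1
    have hL0 : (0:ℝ) ≤ 10*M*((n:ℕ):ℝ) := by positivity
    have hbox : ∀ a b : ℝ, 4*M + 10*M*((n:ℕ):ℝ) ≤ a → a ≤ 4*M + 10*M*((n:ℕ):ℝ) + 2*M →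
        -M ≤ b → b ≤ M → ((a, b) : ℝ × ℝ) ∈ Kset M x := by
      intro a b h1' h2' h3' h4'
      exact Set.mem_iUnion.mpr ⟨n, Or.inr (mem_box.mpr ⟨⟨h1', h2'⟩, h3', h4'⟩)⟩
    have hAK := hbox (4*M + 10*M*((n:ℕ):ℝ)) M (le_refl _) (by linarith) (by linarith) (le_refl _)
    have hBK := hbox (4*M + 10*M*((n:ℕ):ℝ)) (-M) (le_refl _) (by linarith) (le_refl _) (by linarith)
    have hCK := hbox (4*M + 10*M*((n:ℕ):ℝ) + 2*M) M (by linarith) (le_refl _) (by linarith) (le_refl _)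
    set A : ↥(Kset M x) := ⟨(4*M + 10*M*((n:ℕ):ℝ), M), hAK⟩ with hAdef
    set B : ↥(Kset M x) := ⟨(4*M + 10*M*((n:ℕ):ℝ), -M), hBK⟩ with hBdef
    set C : ↥(Kset M x) := ⟨(4*M + 10*M*((n:ℕ):ℝ) + 2*M, M), hCK⟩ with hCdef
    -- pL is within 2M of each corner
    have hnear : ∀ q : ↥(Kset M x), |(pL:ℝ×ℝ).1 - (q:ℝ×ℝ).1| ≤ 2*M →
        |(pL:ℝ×ℝ).2 - (q:ℝ×ℝ).2| ≤ 2*M →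
        ((F q : ℝ × ℝ) = pp M y z0 ∨ (F q : ℝ × ℝ) = pm M y z0) := by
      intro q hq1 hq2
      have hdq : dist (pL:ℝ×ℝ) (q:ℝ×ℝ) ≤ 2*M := by
        rw [dist2]; exact max_le hq1 hq2
      have himg : dist ((F pL : ℝ×ℝ)) ((F q : ℝ×ℝ)) ≤ 2*M + 2*δ := by
        have := abs_le.mp (hd' pL q)
        linarith [this.1]
      apply tip_id hM (F q).2 z0
      rw [hz0n, mul_zero, sub_zero]
      have h1 := abs_fst_le ((F pL : ℝ×ℝ)) ((F q : ℝ×ℝ))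
      rw [hsFpL] at h1
      rw [abs_of_nonneg (fst_nonneg hM (F q).2)]
      have h2 := neg_abs_le ((0:ℝ) - ((F q : ℝ×ℝ)).1)
      have h3 : -(2*M + 2*δ) ≤ (0:ℝ) - ((F q : ℝ×ℝ)).1 := by
        have h4 := le_trans h1 himg
        linarith
      linarith
    have habs1 : |(pL:ℝ×ℝ).1 - (4*M + 10*M*((n:ℕ):ℝ))| ≤ 2*M := by
      rw [abs_le]; constructor <;> linarith
    have habs1' : |(pL:ℝ×ℝ).1 - (4*M + 10*M*((n:ℕ):ℝ) + 2*M)| ≤ 2*M := by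
      rw [abs_le]; constructor <;> linarith
    have habs2 : |(pL:ℝ×ℝ).2 - M| ≤ 2*M := by
      rw [abs_le]; constructor <;> linarith
    have habs2' : |(pL:ℝ×ℝ).2 - (-M)| ≤ 2*M := by
      rw [abs_le]; constructor <;> linarith
    have hFA := hnear A habs1 habs2
    have hFB := hnear B habs1 habs2'
    have hFC := hnear C habs1' habs2
    -- the three corners are pairwise 2M apart, so images are pairwise distinct
    have hAB : 2*M - 2*δ ≤ dist ((F A : ℝ×ℝ)) ((F B : ℝ×ℝ)) := by
      have hlow : |M - -M| ≤ dist (A:ℝ×ℝ) (B:ℝ×ℝ) := abs_snd_le (A:ℝ×ℝ) (B:ℝ×ℝ)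
      rw [show M - -M = 2*M by ring, abs_of_nonneg (by linarith : (0:ℝ) ≤ 2*M)] at hlow
      have := abs_le.mp (hd' A B)
      linarith [this.2]
    have hAC : 2*M - 2*δ ≤ dist ((F A : ℝ×ℝ)) ((F C : ℝ×ℝ)) := by
      have hlow : |(4*M + 10*M*((n:ℕ):ℝ)) - (4*M + 10*M*((n:ℕ):ℝ) + 2*M)| ≤
          dist (A:ℝ×ℝ) (C:ℝ×ℝ) := abs_fst_le (A:ℝ×ℝ) (C:ℝ×ℝ)
      rw [show (4*M + 10*M*((n:ℕ):ℝ)) - (4*M + 10*M*((n:ℕ):ℝ) + 2*M) = -(2*M) by ring,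
        abs_neg, abs_of_nonneg (by linarith : (0:ℝ) ≤ 2*M)] at hlow
      have := abs_le.mp (hd' A C)
      linarith [this.2]
    have hBC : 2*M - 2*δ ≤ dist ((F B : ℝ×ℝ)) ((F C : ℝ×ℝ)) := by
      have hlow : |(4*M + 10*M*((n:ℕ):ℝ)) - (4*M + 10*M*((n:ℕ):ℝ) + 2*M)| ≤
          dist (B:ℝ×ℝ) (C:ℝ×ℝ) := abs_fst_le (B:ℝ×ℝ) (C:ℝ×ℝ)
      rw [show (4*M + 10*M*((n:ℕ):ℝ)) - (4*M + 10*M*((n:ℕ):ℝ) + 2*M) = -(2*M) by ring,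
        abs_neg, abs_of_nonneg (by linarith : (0:ℝ) ≤ 2*M)] at hlow
      have := abs_le.mp (hd' B C)
      linarith [this.2]
    rcases hFA with e1 | e1 <;> rcases hFB with e2 | e2 <;> rcases hFC with e3 | e3 <;>
      first
      | (rw [e1, e2, dist_self] at hAB; linarith)
      | (rw [e1, e3, dist_self] at hAC; linarith)
      | (rw [e2, e3, dist_self] at hBC; linarith)
  obtain ⟨k, hk⟩ := hpLtip
  have hspL : (pL : ℝ × ℝ).1 = 10*M*((k:ℕ):ℝ) := by
    rcases hk with h | h <;> rw [h] <;> rfl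
  -- right corner of K_y and its approximate preimage pR
  have hN1cast : (0:ℝ) ≤ ((N-1:ℕ):ℝ) := Nat.cast_nonneg _
  set nL : Fin N := ⟨N-1, Nat.sub_lt hN one_pos⟩ with hnLdef
  have hnLcast : ((nL:ℕ):ℝ) = ((N-1:ℕ):ℝ) := rfl
  have hmkK : ∀ (z : Fin N → ℝ) (n : Fin N) (a b : ℝ), 4*M + 10*M*((n:ℕ):ℝ) ≤ a →
      a ≤ 4*M + 10*M*((n:ℕ):ℝ) + 2*M → -M ≤ b → b ≤ M → ((a, b) : ℝ × ℝ) ∈ Kset M z := by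
    intro z n a b h1' h2' h3' h4'
    exact Set.mem_iUnion.mpr ⟨n, Or.inr (mem_box.mpr ⟨⟨h1', h2'⟩, h3', h4'⟩)⟩
  have hRK : ((4*M + 10*M*((N-1:ℕ):ℝ) + 2*M, M) : ℝ × ℝ) ∈ Kset M y := by
    refine hmkK y nL _ _ ?_ ?_ (by linarith) (le_refl _) <;> rw [hnLcast] <;> linarith
  obtain ⟨pR, hpR⟩ := hcov' _ hRK
  have hsFpR : 4*M + 10*M*((N-1:ℕ):ℝ) + 2*M - 2*δ ≤ ((F pR : ℝ × ℝ)).1 := by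
    have h1 := abs_fst_le ((F pR : ℝ×ℝ)) ((4*M + 10*M*((N-1:ℕ):ℝ) + 2*M, M) : ℝ × ℝ)
    have h2 := abs_le.mp (le_trans h1 hpR)
    have h3 : ((4*M + 10*M*((N-1:ℕ):ℝ) + 2*M, M) : ℝ × ℝ).1
        = 4*M + 10*M*((N-1:ℕ):ℝ) + 2*M := rfl
    rw [h3] at h2
    linarith [h2.1]
  have hdLR : 4*M + 10*M*((N-1:ℕ):ℝ) + 2*M - 4*δ ≤ dist (pL:ℝ×ℝ) (pR:ℝ×ℝ) := by
    have h1 := abs_fst_le ((F pL : ℝ×ℝ)) ((F pR : ℝ×ℝ))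
    rw [hsFpL] at h1
    have h2 : ((F pR : ℝ×ℝ)).1 ≤ |0 - ((F pR : ℝ×ℝ)).1| := by
      rw [zero_sub, abs_neg]; exact le_abs_self _
    have h3 := abs_le.mp (hd' pL pR)
    linarith [h3.2]
  -- k = 0
  have hk0 : ((k:ℕ):ℝ) = 0 := by
    by_contra hkne
    have hk1 : (1:ℝ) ≤ ((k:ℕ):ℝ) := by
      have hne : (k:ℕ) ≠ 0 := fun h0 => hkne (by rw [h0]; simp)
      exact_mod_cast Nat.one_le_iff_ne_zero.mpr hne
    have hkle : ((k:ℕ):ℝ) ≤ ((N-1:ℕ):ℝ) := Nat.cast_le.mpr (Nat.le_pred_of_lt k.isLt)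
    have h10 : (0:ℝ) ≤ 10*M := by linarith
    have hKk1 : 10*M*(1:ℝ) ≤ 10*M*((k:ℕ):ℝ) := mul_le_mul_of_nonneg_left hk1 h10
    have hKk2 : 10*M*((k:ℕ):ℝ) ≤ 10*M*((N-1:ℕ):ℝ) := mul_le_mul_of_nonneg_left hkle h10
    have hN1ge1 : (1:ℝ) ≤ ((N-1:ℕ):ℝ) := le_trans hk1 hkle
    have hup := dist_le_K hM hx pL.2 pR.2
    obtain ⟨j, hj⟩ := mem_kset pR.2
    have hjle : ((j:ℕ):ℝ) ≤ ((N-1:ℕ):ℝ) := Nat.cast_le.mpr (Nat.le_pred_of_lt j.isLt)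
    have hj0 : (0:ℝ) ≤ 10*M*((j:ℕ):ℝ) := by positivity
    have hKj2 : 10*M*((j:ℕ):ℝ) ≤ 10*M*((N-1:ℕ):ℝ) := mul_le_mul_of_nonneg_left hjle h10
    have hΔ : |(pL:ℝ×ℝ).1 - (pR:ℝ×ℝ).1| ≤ 10*M*((N-1:ℕ):ℝ) := by
      rw [hspL, abs_le]
      rcases hj with h2 | h2 | h2
      · have he : (pR:ℝ×ℝ).1 = 10*M*((j:ℕ):ℝ) := by rw [h2]; rfl
        rw [he]
        constructor <;> linarith
      · have he : (pR:ℝ×ℝ).1 = 10*M*((j:ℕ):ℝ) := by rw [h2]; rfl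
        rw [he]
        constructor <;> linarith
      · obtain ⟨⟨hc1, hc2⟩, _, _⟩ := mem_box.mp h2
        constructor <;> linarith
    have hfin : dist (pL:ℝ×ℝ) (pR:ℝ×ℝ) ≤ 10*M*((N-1:ℕ):ℝ) := by
      refine le_trans hup (max_le hΔ ?_)
      linarith
    linarith
  have hspL0 : (pL : ℝ × ℝ).1 = 0 := by rw [hspL, hk0, mul_zero]
  -- locate images of the two tips at cluster n1
  set c : ℝ := 10*M*((n1:ℕ):ℝ) with hcdef
  have hc0 : (0:ℝ) ≤ c := by rw [hcdef]; positivity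
  have hloc : ∀ p : ↥(Kset M x), (p:ℝ×ℝ).1 = c →
      ((F p : ℝ×ℝ) = pp M y n1 ∨ (F p : ℝ×ℝ) = pm M y n1) := by
    intro p hp1
    apply tip_id hM (F p).2 n1
    have hd1low : c ≤ dist (p:ℝ×ℝ) (pL:ℝ×ℝ) := by
      have h := abs_fst_le (p:ℝ×ℝ) (pL:ℝ×ℝ)
      rwa [hp1, hspL0, sub_zero, abs_of_nonneg hc0] at h
    have hd1high : dist (p:ℝ×ℝ) (pL:ℝ×ℝ) ≤ max c (2*M) := by
      have h := dist_le_K hM hx p.2 pL.2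
      rwa [hp1, hspL0, sub_zero, abs_of_nonneg hc0] at h
    have hd2low : ((F p:ℝ×ℝ)).1 ≤ dist ((F p:ℝ×ℝ)) ((F pL:ℝ×ℝ)) := by
      have h := abs_fst_le ((F p:ℝ×ℝ)) ((F pL:ℝ×ℝ))
      rwa [hsFpL, sub_zero, abs_of_nonneg (fst_nonneg hM (F p).2)] at h
    have hd2high : dist ((F p:ℝ×ℝ)) ((F pL:ℝ×ℝ)) ≤ max ((F p:ℝ×ℝ)).1 (2*M) := by
      have h := dist_le_K hM hy (F p).2 (F pL).2
      rwa [hsFpL, sub_zero, abs_of_nonneg (fst_nonneg hM (F p).2)] at h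
    exact window hM hδM hc0 (fst_nonneg hM (F p).2) (hd' p pL) hd1low hd1high hd2low hd2high
  set a : ↥(Kset M x) := ⟨pp M x n1, pp_mem M x n1⟩ with hadef
  set b : ↥(Kset M x) := ⟨pm M x n1, pm_mem M x n1⟩ with hbdef
  have haF := hloc a rfl
  have hbF := hloc b rfl
  -- approximate preimages of the two tips of K_y at cluster n1
  have hTgen : ∀ pT : ↥(Kset M x), ((F pT : ℝ×ℝ)).1 = c → (pT = a ∨ pT = b) := by
    intro pT hsFpT
    have hloc2 : (pT:ℝ×ℝ) = pp M x n1 ∨ (pT:ℝ×ℝ) = pm M x n1 := by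
      apply tip_id hM pT.2 n1
      have hd1low : c ≤ dist ((F pT:ℝ×ℝ)) ((F pL:ℝ×ℝ)) := by
        have h := abs_fst_le ((F pT:ℝ×ℝ)) ((F pL:ℝ×ℝ))
        rwa [hsFpT, hsFpL, sub_zero, abs_of_nonneg hc0] at h
      have hd1high : dist ((F pT:ℝ×ℝ)) ((F pL:ℝ×ℝ)) ≤ max c (2*M) := by
        have h := dist_le_K hM hy (F pT).2 (F pL).2
        rwa [hsFpT, hsFpL, sub_zero, abs_of_nonneg hc0] at h
      have hd2low : ((pT:ℝ×ℝ)).1 ≤ dist (pT:ℝ×ℝ) (pL:ℝ×ℝ) := by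
        have h := abs_fst_le (pT:ℝ×ℝ) (pL:ℝ×ℝ)
        rwa [hspL0, sub_zero, abs_of_nonneg (fst_nonneg hM pT.2)] at h
      have hd2high : dist (pT:ℝ×ℝ) (pL:ℝ×ℝ) ≤ max ((pT:ℝ×ℝ)).1 (2*M) := by
        have h := dist_le_K hM hx pT.2 pL.2
        rwa [hspL0, sub_zero, abs_of_nonneg (fst_nonneg hM pT.2)] at h
      have h12 : |dist ((F pT:ℝ×ℝ)) ((F pL:ℝ×ℝ)) - dist (pT:ℝ×ℝ) (pL:ℝ×ℝ)| ≤ 2*δ := by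
        have h := hd' pT pL
        rwa [abs_sub_comm] at h
      exact window hM hδM hc0 (fst_nonneg hM pT.2) h12 hd1low hd1high hd2low hd2high
    rcases hloc2 with h | h
    · exact Or.inl (Subtype.ext h)
    · exact Or.inr (Subtype.ext h)
  obtain ⟨pT, hT⟩ := hcov' (pp M y n1) (pp_mem M y n1)
  obtain ⟨pT', hT'⟩ := hcov' (pm M y n1) (pm_mem M y n1)
  have hFpT : (F pT : ℝ×ℝ) = pp M y n1 ∨ (F pT : ℝ×ℝ) = pm M y n1 := by
    apply tip_id hM (F pT).2 n1
    have h1 := abs_fst_le ((F pT:ℝ×ℝ)) (pp M y n1)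
    have h2 : (pp M y n1).1 = c := rfl
    rw [h2] at h1
    calc |((F pT:ℝ×ℝ)).1 - c| ≤ dist ((F pT:ℝ×ℝ)) (pp M y n1) := h1
      _ ≤ 2*δ := hT
      _ < 4*M := by linarith
  have hFpT' : (F pT' : ℝ×ℝ) = pp M y n1 ∨ (F pT' : ℝ×ℝ) = pm M y n1 := by
    apply tip_id hM (F pT').2 n1
    have h1 := abs_fst_le ((F pT':ℝ×ℝ)) (pm M y n1)
    have h2 : (pm M y n1).1 = c := rfl
    rw [h2] at h1
    calc |((F pT':ℝ×ℝ)).1 - c| ≤ dist ((F pT':ℝ×ℝ)) (pm M y n1) := h1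
      _ ≤ 2*δ := hT'
      _ < 4*M := by linarith
  have hpTab : pT = a ∨ pT = b := by
    apply hTgen
    rcases hFpT with h | h <;> rw [h] <;> rfl
  have hpTab' : pT' = a ∨ pT' = b := by
    apply hTgen
    rcases hFpT' with h | h <;> rw [h] <;> rfl
  -- endgame
  have hPQ : dist (pp M y n1) (pm M y n1) = 2 * y n1 := dist_pp_pm n1 (hy n1).1
  have hab : dist (a:ℝ×ℝ) (b:ℝ×ℝ) = 2 * x n1 := dist_pp_pm n1 (hx n1).1
  have hdistab := abs_le.mp (hd' a b)
  rw [hab] at hdistab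
  have hcontra : |x n1 - y n1| ≤ δ := by
    by_cases hFab : (F a : ℝ×ℝ) = (F b : ℝ×ℝ)
    · -- collapsed case
      have hd0 : dist ((F a:ℝ×ℝ)) ((F b:ℝ×ℝ)) = 0 := by rw [hFab, dist_self]
      rw [hd0] at hdistab
      have hu : x n1 ≤ δ := by linarith [hdistab.2]
      have hFeq : ∀ pS : ↥(Kset M x), pS = a ∨ pS = b → (F pS : ℝ×ℝ) = (F a : ℝ×ℝ) := by
        intro pS hS
        rcases hS with h | h
        · rw [h]
        · rw [h]; exact hFab.symm
      have h1 : dist ((F a:ℝ×ℝ)) (pp M y n1) ≤ 2*δ := by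
        rw [← hFeq pT hpTab]; exact hT
      have h2 : dist ((F a:ℝ×ℝ)) (pm M y n1) ≤ 2*δ := by
        rw [← hFeq pT' hpTab']; exact hT'
      have hv : y n1 ≤ δ := by
        rcases haF with h | h
        · rw [h] at h2
          rw [hPQ] at h2
          linarith
        · rw [h, dist_comm, hPQ] at h1
          linarith
      rw [abs_le]
      constructor <;> linarith [(hx n1).1, (hy n1).1]
    · -- distinct images
      have hFaFb : dist ((F a:ℝ×ℝ)) ((F b:ℝ×ℝ)) = 2 * y n1 := by
        rcases haF with h1 | h1 <;> rcases hbF with h2 | h2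
        · exact absurd (h1.trans h2.symm) hFab
        · rw [h1, h2]; exact hPQ
        · rw [h1, h2, dist_comm]; exact hPQ
        · exact absurd (h1.trans h2.symm) hFab
      rw [hFaFb] at hdistab
      rw [abs_le]
      constructor <;> linarith [hdistab.1, hdistab.2]
  linarith
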